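/- A cubic (3-regular) graph G has an error-correcting identifying code if and only if G is twin-free and triangle-free. -/

import Mathlib

open SimpleGraph

variable {V : Type*}

/-- Closed neighborhood of `v` in `G`. -/
def closedNbhd (G : SimpleGraph V) (v : V) : Set V := insert v (G.neighborSet v)

/-- `S` is an error-correcting identifying code for `G`: every vertex is 3-dominated
and every pair of distinct vertices is 3-distinguished. -/
def IsErrIC (G : SimpleGraph V) (S : Set V) : Prop :=
  (∀ v : V, 3 ≤ (closedNbhd G v ∩ S).ncard) ∧
  ∀ u v : V, u ≠ v → 3 ≤ (symmDiff (closedNbhd G u ∩ S) (closedNbhd G v ∩ S)).ncard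

/-- `G` has no closed twins and no open twins. -/
def TwinFree (G : SimpleGraph V) : Prop :=
  ∀ u v : V, u ≠ v →
    closedNbhd G u ≠ closedNbhd G v ∧ G.neighborSet u ≠ G.neighborSet v

/-! A code only loses separating power when vertices are removed from it, so a cubic graph has an
error-correcting identifying code iff `V` itself is one. Since closed neighbourhoods have four
vertices, `|N[u] ∆ N[v]| = 8 - 2 |N[u] ∩ N[v]|`, so `V` is a code iff no two closed
neighbourhoods share three vertices. Sharing three vertices means that `u, v` are closed twins,
open twins, or lie on a common triangle. -/

theorem Set.ncard_symmDiff_add_two_mul_ncard_inter {α : Type*} [Finite α] (s t : Set α) :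
    (symmDiff s t).ncard + 2 * (s ∩ t).ncard = s.ncard + t.ncard := by
  rw [Set.symmDiff_def, Set.ncard_union_eq disjoint_sdiff_sdiff]
  have hs := Set.ncard_inter_add_ncard_sdiff_eq_ncard s t
  have ht := Set.ncard_inter_add_ncard_sdiff_eq_ncard t s
  rw [Set.inter_comm] at ht
  omega

theorem Set.ncard_inter_lt_left_of_ne {α : Type*} [Finite α] {s t : Set α}
    (hst : s.ncard = t.ncard) (hne : s ≠ t) : (s ∩ t).ncard < s.ncard := by
  refine Set.ncard_lt_ncard (Set.inter_subset_left.ssubset_of_ne fun h => hne ?_)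
  exact Set.eq_of_subset_of_ncard_le (Set.inter_eq_left.mp h) hst.ge

section

variable {G : SimpleGraph V}

theorem closedNbhd_inter_subset_of_adj (hcf : G.CliqueFree 3) {u v : V} (huv : G.Adj u v) :
    closedNbhd G u ∩ closedNbhd G v ⊆ {u, v} := by
  classical
  rintro x ⟨rfl | hux, rfl | hvx⟩
  · exact .inl rfl
  · exact .inl rfl
  · exact .inr rfl
  · exact (hcf {u, v, x} (is3Clique_triple_iff.2 ⟨huv, hux, hvx⟩)).elim

theorem closedNbhd_inter_eq_of_not_adj {u v : V} (hne : u ≠ v) (huv : ¬G.Adj u v) :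
    closedNbhd G u ∩ closedNbhd G v = G.neighborSet u ∩ G.neighborSet v := by
  refine subset_antisymm ?_ (Set.inter_subset_inter (Set.subset_insert _ _) (Set.subset_insert _ _))
  rintro x ⟨rfl | hux, rfl | hvx⟩
  · exact (hne rfl).elim
  · exact (huv hvx.symm).elim
  · exact (huv hux).elim
  · exact ⟨hux, hvx⟩

theorem triple_subset_closedNbhd_inter {a b c : V} (hab : G.Adj a b) (hac : G.Adj a c)
    (hbc : G.Adj b c) : {a, b, c} ⊆ closedNbhd G a ∩ closedNbhd G b := by
  rintro x (rfl | rfl | rfl)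
  · exact ⟨.inl rfl, .inr hab.symm⟩
  · exact ⟨.inr hab, .inl rfl⟩
  · exact ⟨.inr hac, .inr hbc⟩

end

section

variable [Finite V] {G : SimpleGraph V}

theorem IsErrIC.univ {S : Set V} (hS : IsErrIC G S) : IsErrIC G Set.univ := by
  refine ⟨fun v => ?_, fun u v huv => ?_⟩
  · exact (hS.1 v).trans (Set.ncard_le_ncard (Set.inter_subset_inter_right _ (Set.subset_univ S)))
  · rw [Set.inter_univ, Set.inter_univ]
    have := hS.2 u v huv
    rw [← Set.inter_symmDiff_distrib_right] at this
    exact this.trans (Set.ncard_le_ncard Set.inter_subset_left)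

theorem exists_isErrIC_iff : (∃ S, IsErrIC G S) ↔ IsErrIC G Set.univ :=
  ⟨fun ⟨_, hS⟩ => hS.univ, fun h => ⟨_, h⟩⟩

theorem isErrIC_univ_iff (h4 : ∀ v, (closedNbhd G v).ncard = 4) :
    IsErrIC G Set.univ ↔
      ∀ u v, u ≠ v → (closedNbhd G u ∩ closedNbhd G v).ncard ≤ 2 := by
  simp only [IsErrIC, Set.inter_univ, h4]
  rw [and_iff_right fun _ => Nat.le_succ 3]
  refine forall₂_congr fun u v => imp_congr_right fun _ => ?_
  have := Set.ncard_symmDiff_add_two_mul_ncard_inter (closedNbhd G u) (closedNbhd G v)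
  rw [h4, h4] at this
  omega

theorem ncard_closedNbhd (hreg : ∀ v, (G.neighborSet v).ncard = 3) (v : V) :
    (closedNbhd G v).ncard = 4 := by
  rw [closedNbhd, Set.ncard_insert_of_notMem G.notMem_neighborSet_self, hreg]

theorem twinFree_and_cliqueFree_of_ncard_closedNbhd_inter_le
    (hreg : ∀ v, (G.neighborSet v).ncard = 3)
    (h : ∀ u v, u ≠ v → (closedNbhd G u ∩ closedNbhd G v).ncard ≤ 2) :
    TwinFree G ∧ G.CliqueFree 3 := by
  classical
  refine ⟨fun u v huv => ⟨fun heq => ?_, fun heq => ?_⟩, fun t ht => ?_⟩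
  · have := h u v huv
    rw [heq, Set.inter_self, ncard_closedNbhd hreg] at this
    omega
  · have hsub : G.neighborSet u ⊆ closedNbhd G u ∩ closedNbhd G v :=
      Set.subset_inter (Set.subset_insert _ _) (heq ▸ Set.subset_insert _ _)
    have := (Set.ncard_le_ncard hsub).trans (h u v huv)
    rw [hreg] at this
    omega
  · obtain ⟨a, b, c, hab, hac, hbc, -⟩ := is3Clique_iff.1 ht
    have hcard : ({a, b, c} : Set V).ncard = 3 := by
      rw [Set.ncard_eq_three]
      exact ⟨a, b, c, hab.ne, hac.ne, hbc.ne, rfl⟩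
    have := (Set.ncard_le_ncard (triple_subset_closedNbhd_inter hab hac hbc)).trans
      (h a b hab.ne)
    omega

theorem ncard_closedNbhd_inter_le_of_twinFree (hreg : ∀ v, (G.neighborSet v).ncard = 3)
    (htf : TwinFree G) (hcf : G.CliqueFree 3) {u v : V} (hne : u ≠ v) :
    (closedNbhd G u ∩ closedNbhd G v).ncard ≤ 2 := by
  by_cases huv : G.Adj u v
  · exact (Set.ncard_le_ncard (closedNbhd_inter_subset_of_adj hcf huv)).trans
      (Set.ncard_pair hne).le
  · rw [closedNbhd_inter_eq_of_not_adj hne huv]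
    have := Set.ncard_inter_lt_left_of_ne ((hreg u).trans (hreg v).symm) (htf u v hne).2
    rw [hreg] at this
    omega

end

theorem stmt9 [Fintype V] (G : SimpleGraph V)
    (hreg : ∀ v : V, (G.neighborSet v).ncard = 3) :
    (∃ S : Set V, IsErrIC G S) ↔ (TwinFree G ∧ G.CliqueFree 3) := by
  rw [exists_isErrIC_iff, isErrIC_univ_iff (ncard_closedNbhd hreg)]
  exact ⟨twinFree_and_cliqueFree_of_ncard_closedNbhd_inter_le hreg,
    fun ⟨htf, hcf⟩ _ _ hne => ncard_closedNbhd_inter_le_of_twinFree hreg htf hcf hne⟩
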